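/- Let (φ_i) satisfy φ_{i+1} ≤ ρ^k·φ_i + ρ^k·(δ+γ)·Δ_{i+1} + σ²/(2μ), with ρ ∈ (0,1), δ+γ > 0, and let ρ̃ ∈ (ρ^k, 1), ε₀ := φ_0. If Δ_{i+1} ≤ ((ρ̃ - ρ^k)/ρ^k)·(ε₀/(δ+γ))·ρ̃^i and ρ^k ≤ ρ̃ for all i, then φ_i ≤ ρ̃^i·ε₀ + (σ²/(2μ))·∑_{j=0}^{i-1} ρ̃^j for all i ≥ 0. -/
import Mathlib


open Finset

/-- Core induction of Theorem 3.11 (global linear convergence of H-SGD). -/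
theorem stmt10 (φ : ℕ → ℝ) (Δ : ℕ → ℝ)
    (ρ ρt σ2 μ δ γ : ℝ) (k : ℕ)
    (hρ0 : 0 < ρ) (hρ1 : ρ < 1)
    (hδγ : 0 < δ + γ) (hμ : 0 < μ) (hσ : 0 ≤ σ2)
    (hρt1 : ρt < 1) (hρtk : ρ ^ k < ρt)
    (hrec : ∀ i, φ (i + 1) ≤ ρ ^ k * φ i + ρ ^ k * (δ + γ) * Δ (i + 1) + σ2 / (2 * μ))
    (hΔ : ∀ i, Δ (i + 1) ≤ ((ρt - ρ ^ k) / ρ ^ k) * (φ 0 / (δ + γ)) * ρt ^ i) :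
    ∀ i, φ i ≤ ρt ^ i * φ 0 + (σ2 / (2 * μ)) * ∑ j ∈ Finset.range i, ρt ^ j := by
  have hρk : (0:ℝ) < ρ ^ k := pow_pos hρ0 k
  have hρt0 : (0:ℝ) < ρt := lt_trans hρk hρtk
  have hC : (0:ℝ) ≤ σ2 / (2 * μ) := by positivity
  intro i
  induction i with
  | zero => simp
  | succ i ih =>
    have hS : (0:ℝ) ≤ ∑ j ∈ Finset.range i, ρt ^ j :=
      Finset.sum_nonneg fun j _ => le_of_lt (pow_pos hρt0 j)
    have h1 : ρ ^ k * (δ + γ) * Δ (i + 1) ≤ (ρt - ρ ^ k) * φ 0 * ρt ^ i := by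
      have := mul_le_mul_of_nonneg_left (hΔ i) (by positivity : (0:ℝ) ≤ ρ ^ k * (δ + γ))
      calc ρ ^ k * (δ + γ) * Δ (i + 1)
          ≤ ρ ^ k * (δ + γ) * (((ρt - ρ ^ k) / ρ ^ k) * (φ 0 / (δ + γ)) * ρt ^ i) := by
            linarith
        _ = (ρt - ρ ^ k) * φ 0 * ρt ^ i := by
            field_simp
    have h2 : ρ ^ k * φ i ≤ ρ ^ k * (ρt ^ i * φ 0 + (σ2 / (2 * μ)) * ∑ j ∈ Finset.range i, ρt ^ j) :=
      mul_le_mul_of_nonneg_left ih (le_of_lt hρk)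
    have h3 : ρ ^ k * ((σ2 / (2 * μ)) * ∑ j ∈ Finset.range i, ρt ^ j)
        ≤ ρt * ((σ2 / (2 * μ)) * ∑ j ∈ Finset.range i, ρt ^ j) := by
      apply mul_le_mul_of_nonneg_right (le_of_lt hρtk) (by positivity)
    have hsum : ∑ j ∈ Finset.range (i + 1), ρt ^ j
        = 1 + ρt * ∑ j ∈ Finset.range i, ρt ^ j := by
      rw [geom_sum_succ]
      ring
    have := hrec i
    calc φ (i + 1) ≤ ρ ^ k * φ i + ρ ^ k * (δ + γ) * Δ (i + 1) + σ2 / (2 * μ) := this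
      _ ≤ ρt ^ (i + 1) * φ 0 + (σ2 / (2 * μ)) * ∑ j ∈ Finset.range (i + 1), ρt ^ j := by
          rw [hsum, pow_succ]
          nlinarith [h1, h2, h3]
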